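/- arXiv:math/9803060 — 2 statements merged into one kernel-verified Lean document; each statement's English description precedes it below -/
import Mathlib

section
/- Let A ≠ 0 be an n×m complex matrix with norms μ_1, μ_2 on C^m and ν_1, ν_2 on C^n. If ‖A‖^{(2)} = M_μ · M_ν · ‖A‖^{(1)}, where M_μ = max μ_1(x)/μ_2(x) and M_ν = max ν_2(y)/ν_1(y), then every maximizer v of ν_2(Ax)/μ_2(x) satisfies: (i) v maximizes μ_1(x)/μ_2(x); (ii) Av maximizes ν_2(y)/ν_1(y); (iii) v maximizes ν_1(Ax)/μ_1(x). -/
open scoped BigOperators ENNReal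

/-- The Hölder `ℓ_p` norm of a vector in `ℂ^m`, for `p ∈ [1,∞]`. -/
noncomputable def lpNorm {m : ℕ} (p : ℝ≥0∞) (x : Fin m → ℂ) : ℝ :=
  if p = ⊤ then ⨆ i, ‖x i‖ else (∑ i, ‖x i‖ ^ p.toReal) ^ (1 / p.toReal)

/-- The operator norm of an `n × m` complex matrix induced by `ℓ_p` on `ℂ^m`
and `ℓ_q` on `ℂ^n`. -/
noncomputable def opNorm {n m : ℕ} (p q : ℝ≥0∞) (A : Matrix (Fin n) (Fin m) ℂ) : ℝ :=
  ⨆ x : {x : Fin m → ℂ // x ≠ 0}, lpNorm q (A.mulVec x.1) / lpNorm p x.1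

/-- The operator norm of an `n × m` complex matrix induced by general norms
`μ` on `ℂ^m` and `ν` on `ℂ^n`. -/
noncomputable def opNormGen {n m : ℕ} (μ : (Fin m → ℂ) → ℝ) (ν : (Fin n → ℂ) → ℝ)
    (A : Matrix (Fin n) (Fin m) ℂ) : ℝ :=
  ⨆ x : {x : Fin m → ℂ // x ≠ 0}, ν (A.mulVec x.1) / μ x.1

/-! Writing `ν₂(Av)/μ₂(v) = (μ₁v/μ₂v) · (ν₂(Av)/ν₁(Av)) · (ν₁(Av)/μ₁v)`, each factor is positive
and at most the corresponding supremum, while the hypothesis says that the supremum of the left side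
is the product of these suprema. Hence a maximizer `v` forces every factor to attain its supremum.
The suprema are finite because the ratio of two norms on a finite-dimensional space is bounded. -/

open Metric Matrix

section SeminormRatio

variable {E : Type*} [NormedAddCommGroup E] [NormedSpace ℝ E] [FiniteDimensional ℝ E]

theorem Seminorm.continuous_of_finiteDimensional (p : Seminorm ℝ E) : Continuous p :=
  p.convexOn.locallyLipschitz.continuous

/-- The ratio is invariant under scaling, so its range is the image of the compact unit sphere. -/
theorem Seminorm.bddAbove_range_div (p q : Seminorm ℝ E) (hq : ∀ x, q x = 0 → x = 0) :
    BddAbove (Set.range fun x : {x : E // x ≠ 0} => p x / q x) := by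
  have hcont : ContinuousOn (fun x => p x / q x) (sphere 0 1) :=
    p.continuous_of_finiteDimensional.continuousOn.div
      q.continuous_of_finiteDimensional.continuousOn
      fun x hx => mt (hq x) (ne_zero_of_mem_unit_sphere ⟨x, hx⟩)
  obtain ⟨C, hC⟩ := (isCompact_sphere (0 : E) 1).bddAbove_image hcont
  refine ⟨C, Set.forall_mem_range.2 fun ⟨x, hx⟩ => ?_⟩
  have hscale : p (‖x‖⁻¹ • x) / q (‖x‖⁻¹ • x) = p x / q x := by
    rw [map_smul_eq_mul, map_smul_eq_mul, mul_div_mul_left _ _ (by simpa using hx)]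
  rw [← hscale]
  exact hC ⟨_, by simpa using norm_smul_inv_norm (𝕜 := ℝ) hx, rfl⟩

theorem Seminorm.div_le_iSup_div (p q : Seminorm ℝ E) (hq : ∀ x, q x = 0 → x = 0) {x : E}
    (hx : x ≠ 0) : p x / q x ≤ ⨆ y : {y : E // y ≠ 0}, p y / q y :=
  le_ciSup (p.bddAbove_range_div q hq) ⟨x, hx⟩

end SeminormRatio

theorem Seminorm.pos_of_ne_zero {𝕜 E : Type*} [SeminormedRing 𝕜] [AddGroup E] [SMul 𝕜 E]
    (p : Seminorm 𝕜 E) (hp : ∀ x, p x = 0 → x = 0) {x : E} (hx : x ≠ 0) : 0 < p x :=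
  (apply_nonneg p x).lt_of_ne' (mt (hp x) hx)

theorem Matrix.exists_mulVec_ne_zero {ι κ R : Type*} [Fintype κ] [DecidableEq κ] [CommSemiring R]
    {A : Matrix ι κ R} (hA : A ≠ 0) : ∃ x, A *ᵥ x ≠ 0 := by
  simpa using DFunLike.ne_iff.1 (Matrix.toLin'.map_ne_zero_iff.2 hA)

theorem eq_and_eq_and_eq_of_mul_mul_eq {α : Type*} [Semiring α] [LinearOrder α]
    [IsStrictOrderedRing α] {a b c a' b' c' : α} (ha : 0 < a) (hb : 0 < b) (hc : 0 < c)
    (haa' : a ≤ a') (hbb' : b ≤ b') (hcc' : c ≤ c') (h : a * b * c = a' * b' * c') :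
    a = a' ∧ b = b' ∧ c = c' := by
  obtain ⟨hab, rfl⟩ := (mul_eq_mul_iff_eq_and_eq_of_pos
    (mul_le_mul haa' hbb' hb.le (ha.trans_le haa').le) hcc' (mul_pos ha hb)
      (hc.trans_le hcc')).1 h
  obtain ⟨rfl, rfl⟩ := (mul_eq_mul_iff_eq_and_eq_of_pos haa' hbb' ha (hb.trans_le hbb')).1 hab
  exact ⟨rfl, rfl, rfl⟩

section OpNormGen

variable {n m : ℕ} {A : Matrix (Fin n) (Fin m) ℂ} {μ : Seminorm ℂ (Fin m → ℂ)}
  {ν : Seminorm ℂ (Fin n → ℂ)}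

theorem div_le_opNormGen (hμ : ∀ x, μ x = 0 → x = 0) {x : Fin m → ℂ} (hx : x ≠ 0) :
    ν (A *ᵥ x) / μ x ≤ opNormGen (fun x => μ x) (fun y => ν y) A :=
  ((ν.comp A.mulVecLin).restrictScalars ℝ).div_le_iSup_div (μ.restrictScalars ℝ) hμ hx

theorem opNormGen_pos (hA : A ≠ 0) (hμ : ∀ x, μ x = 0 → x = 0) (hν : ∀ y, ν y = 0 → y = 0) :
    0 < opNormGen (fun x => μ x) (fun y => ν y) A := by
  obtain ⟨x, hAx⟩ := exists_mulVec_ne_zero hA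
  have hx : x ≠ 0 := by rintro rfl; simp at hAx
  exact (div_pos (ν.pos_of_ne_zero hν hAx) (μ.pos_of_ne_zero hμ hx)).trans_le
    (div_le_opNormGen hμ hx)

end OpNormGen

/-- Theorem 1 (necessity): if equality holds in (1.1), then every maximizer `v`
of `ν₂(Ax)/μ₂(x)` maximizes `μ₁/μ₂`, `Av` maximizes `ν₂/ν₁`, and `v`
maximizes `ν₁(Ax)/μ₁(x)`. -/
theorem stmt_4 {n m : ℕ} (A : Matrix (Fin n) (Fin m) ℂ) (hA : A ≠ 0)
    (μ₁ μ₂ : Seminorm ℂ (Fin m → ℂ)) (ν₁ ν₂ : Seminorm ℂ (Fin n → ℂ))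
    (hμ₁ : ∀ x, μ₁ x = 0 → x = 0) (hμ₂ : ∀ x, μ₂ x = 0 → x = 0)
    (hν₁ : ∀ y, ν₁ y = 0 → y = 0) (hν₂ : ∀ y, ν₂ y = 0 → y = 0)
    (heq : opNormGen (fun x => μ₂ x) (fun y => ν₂ y) A =
      (⨆ x : {x : Fin m → ℂ // x ≠ 0}, μ₁ x.1 / μ₂ x.1) *
        (⨆ y : {y : Fin n → ℂ // y ≠ 0}, ν₂ y.1 / ν₁ y.1) *
          opNormGen (fun x => μ₁ x) (fun y => ν₁ y) A) :
    ∀ v : Fin m → ℂ, v ≠ 0 →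
      ν₂ (A.mulVec v) / μ₂ v = opNormGen (fun x => μ₂ x) (fun y => ν₂ y) A →
        (μ₁ v / μ₂ v = ⨆ x : {x : Fin m → ℂ // x ≠ 0}, μ₁ x.1 / μ₂ x.1) ∧
        (ν₂ (A.mulVec v) / ν₁ (A.mulVec v) =
          ⨆ y : {y : Fin n → ℂ // y ≠ 0}, ν₂ y.1 / ν₁ y.1) ∧
        (ν₁ (A.mulVec v) / μ₁ v = opNormGen (fun x => μ₁ x) (fun y => ν₁ y) A) := by
  intro v hv hmax
  have hAv : A *ᵥ v ≠ 0 := fun h => (opNormGen_pos hA hμ₂ hν₂).ne' <| by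
    rw [← hmax, h, map_zero, zero_div]
  have hμ₁v := μ₁.pos_of_ne_zero hμ₁ hv
  have hν₁v := ν₁.pos_of_ne_zero hν₁ hAv
  have hfactor : μ₁ v / μ₂ v * (ν₂ (A *ᵥ v) / ν₁ (A *ᵥ v)) * (ν₁ (A *ᵥ v) / μ₁ v) =
      ν₂ (A *ᵥ v) / μ₂ v := by field_simp
  refine eq_and_eq_and_eq_of_mul_mul_eq (div_pos hμ₁v (μ₂.pos_of_ne_zero hμ₂ hv))
    (div_pos (ν₂.pos_of_ne_zero hν₂ hAv) hν₁v) (div_pos hν₁v hμ₁v)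
    ((μ₁.restrictScalars ℝ).div_le_iSup_div (μ₂.restrictScalars ℝ) hμ₂ hv)
    ((ν₂.restrictScalars ℝ).div_le_iSup_div (ν₁.restrictScalars ℝ) hν₁ hAv)
    (div_le_opNormGen hμ₁ hv) ?_
  rw [hfactor, hmax, heq]
end

section
/- Let A be an n×m complex matrix, 1 < p < ∞, and let v be a maximizer of ‖Ax‖_q/‖x‖_p such that all nonzero components of v have the same absolute value and all nonzero components of Av have the same absolute value. Then v is an eigenvector of A*A. -/
open scoped BigOperators ENNReal

/-!
Call a vector flat if all its nonzero entries have the same modulus. Fix a direction `w` and put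
`z = A v`, `c = ‖A‖_{p,q}`. The `q`-norm need not be differentiable at `z`, but because `z` is
flat, Hölder's inequality gives `‖z‖_q Re⟨z, y⟩ ≤ ‖z‖₂² ‖y‖_q`, with equality at `y = z`. Hence
`t ↦ ‖z‖_q Re⟨z, A (v + t w)⟩ - ‖z‖₂² c ‖v + t w‖_p` is maximal (and zero) at `t = 0`. For
`1 < p < ∞` the `p`-norm is differentiable, and at the flat vector `v` its derivative in
direction `w` is a fixed multiple of `Re⟨v, w⟩`. The vanishing derivative therefore gives
`Re⟨A*A v, w⟩ = Re⟨A v, A w⟩ = s Re⟨v, w⟩` for all `w`, i.e. `A*A v = s v`.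
-/

open Matrix Filter

theorem lpNorm_eq_norm_toLp {m : ℕ} {p : ℝ≥0∞} (hp : p ≠ 0) (x : Fin m → ℂ) :
    lpNorm p x = ‖WithLp.toLp p x‖ := by
  rw [lpNorm]
  split_ifs with h
  · subst h; rfl
  · rw [PiLp.norm_eq_sum (ENNReal.toReal_pos hp h)]

theorem lpNorm_nonneg {m : ℕ} (p : ℝ≥0∞) (x : Fin m → ℂ) : 0 ≤ lpNorm p x := by
  rw [lpNorm]
  split_ifs
  · exact Real.iSup_nonneg fun i => norm_nonneg _
  · positivity

theorem lpNorm_pos {m : ℕ} {p : ℝ≥0∞} [Fact (1 ≤ p)] {x : Fin m → ℂ} (hx : x ≠ 0) :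
    0 < lpNorm p x := by
  rw [lpNorm_eq_norm_toLp (zero_lt_one.trans_le Fact.out).ne']
  simpa using hx

theorem lpNorm_mulVec_le {n m : ℕ} {p q : ℝ≥0∞} [Fact (1 ≤ p)] [Fact (1 ≤ q)]
    (A : Matrix (Fin n) (Fin m) ℂ) (x : Fin m → ℂ) :
    lpNorm q (A *ᵥ x) ≤ opNorm p q A * lpNorm p x := by
  have hp : p ≠ 0 := (zero_lt_one.trans_le Fact.out).ne'
  have hq : q ≠ 0 := (zero_lt_one.trans_le Fact.out).ne'
  rcases eq_or_ne x 0 with rfl | hx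
  · simp [lpNorm_eq_norm_toLp hp, lpNorm_eq_norm_toLp hq]
  let L := LinearMap.toContinuousLinearMap (toLpLin p q A)
  have hbdd : BddAbove (Set.range fun x : {x : Fin m → ℂ // x ≠ 0} =>
      lpNorm q (A *ᵥ x.1) / lpNorm p x.1) := by
    refine ⟨‖L‖, Set.forall_mem_range.2 fun x => ?_⟩
    simpa [lpNorm_eq_norm_toLp hp, lpNorm_eq_norm_toLp hq, L, toLpLin_apply]
      using L.ratio_le_opNorm (WithLp.toLp p x.1)
  rw [← div_le_iff₀ (lpNorm_pos hx)]
  exact le_ciSup hbdd ⟨x, hx⟩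

theorem hasDerivAt_norm_add_smul_rpow {E : Type*} [NormedAddCommGroup E] [InnerProductSpace ℝ E]
    (x u : E) {p : ℝ} (hp : 1 < p) :
    HasDerivAt (fun t : ℝ => ‖x + t • u‖ ^ p) (p * ‖x‖ ^ (p - 2) * inner ℝ x u) 0 := by
  have hline : HasDerivAt (fun t : ℝ => x + t • u) u 0 := by
    simpa using ((hasDerivAt_id (0 : ℝ)).smul_const u).const_add x
  have h := (hasFDerivAt_norm_rpow x hp).comp_hasDerivAt_of_eq (0 : ℝ) hline (by simp)
  simpa [Function.comp_def, mul_assoc] using h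

theorem hasDerivAt_lpNorm_add_smul {m : ℕ} {p : ℝ≥0∞} (hp : 1 < p) (hp_top : p ≠ ⊤)
    {v : Fin m → ℂ} (hv : v ≠ 0) (w : Fin m → ℂ) :
    HasDerivAt (fun t : ℝ => lpNorm p (v + t • w))
      ((∑ i, ‖v i‖ ^ p.toReal) ^ (1 / p.toReal - 1) *
        ∑ i, ‖v i‖ ^ (p.toReal - 2) * inner ℝ (v i) (w i)) 0 := by
  set r := p.toReal
  have hr : 1 < r := by simpa using ENNReal.toReal_strict_mono hp_top hp
  obtain ⟨k, hk⟩ := Function.ne_iff.1 hv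
  have hS : ∑ i, ‖v i‖ ^ r ≠ 0 := by
    refine (Finset.sum_pos' (fun i _ => by positivity) ⟨k, Finset.mem_univ k, ?_⟩).ne'
    exact Real.rpow_pos_of_pos (norm_pos_iff.2 hk) r
  have hsum := HasDerivAt.fun_sum (u := Finset.univ)
    fun i _ => hasDerivAt_norm_add_smul_rpow (v i) (w i) hr
  have h := hsum.rpow_const (p := 1 / r) (Or.inl (by simpa using hS))
  simp only [lpNorm, if_neg hp_top, Pi.add_apply, Pi.smul_apply]
  convert h using 1
  simp only [zero_smul, add_zero, Finset.sum_mul, Finset.mul_sum]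
  refine Finset.sum_congr rfl fun i _ => ?_
  field_simp

theorem sum_norm_le_card_mul_lpNorm_top {n : ℕ} (s : Finset (Fin n)) (y : Fin n → ℂ) :
    ∑ j ∈ s, ‖y j‖ ≤ s.card * lpNorm ⊤ y := by
  rw [← nsmul_eq_mul]
  refine Finset.sum_le_card_nsmul _ _ _ fun j _ => ?_
  rw [lpNorm, if_pos rfl]
  exact le_ciSup (f := fun i => ‖y i‖) (Set.finite_range _).bddAbove j

theorem sum_norm_le_card_rpow_mul_lpNorm {n : ℕ} {q : ℝ≥0∞} (hq : 1 ≤ q) (hq_top : q ≠ ⊤)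
    (s : Finset (Fin n)) (y : Fin n → ℂ) :
    ∑ j ∈ s, ‖y j‖ ≤ (s.card : ℝ) ^ (1 - q.toReal⁻¹) * lpNorm q y := by
  have hr : 1 ≤ q.toReal := by simpa using ENNReal.toReal_mono hq_top hq
  have holder := Real.inner_le_weight_mul_Lp_of_nonneg s hr (fun _ => 1) (fun j => ‖y j‖)
    (fun _ => zero_le_one) fun j => norm_nonneg _
  simp only [one_mul, Finset.sum_const, nsmul_eq_mul, mul_one] at holder
  refine holder.trans (mul_le_mul_of_nonneg_left ?_ (by positivity))
  rw [lpNorm, if_neg hq_top, one_div]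
  gcongr
  exact Finset.subset_univ s

theorem exists_forall_norm_eq_of_pairwise {ι : Type*} {x : ι → ℂ}
    (h : ∀ i j, x i ≠ 0 → x j ≠ 0 → ‖x i‖ = ‖x j‖) : ∃ β, ∀ i, x i ≠ 0 → ‖x i‖ = β := by
  by_cases hx : ∃ j, x j ≠ 0
  · obtain ⟨j, hj⟩ := hx
    exact ⟨‖x j‖, fun i hi => h i j hi hj⟩
  · push Not at hx
    exact ⟨0, fun i hi => absurd (hx i) hi⟩

theorem sum_norm_rpow_mul_inner_of_flat {m : ℕ} {v : Fin m → ℂ} {α : ℝ}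
    (hv : ∀ i, v i ≠ 0 → ‖v i‖ = α) (w : Fin m → ℂ) (e : ℝ) :
    ∑ i, ‖v i‖ ^ e * inner ℝ (v i) (w i) = α ^ e * (star v ⬝ᵥ w).re := by
  rw [dotProduct, Complex.re_sum, Finset.mul_sum]
  refine Finset.sum_congr rfl fun i _ => ?_
  rcases eq_or_ne (v i) 0 with h | h
  · simp [h]
  · rw [hv i h, Complex.inner, mul_comm (w i)]; rfl

section Flat

variable {n : ℕ} {z : Fin n → ℂ} {β : ℝ}

theorem sum_norm_mul_of_flat (hz : ∀ j, z j ≠ 0 → ‖z j‖ = β) (g : Fin n → ℝ) :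
    ∑ j, ‖z j‖ * g j = β * ∑ j ∈ Finset.univ.filter (z · ≠ 0), g j := by
  rw [Finset.sum_filter, Finset.mul_sum]
  refine Finset.sum_congr rfl fun j _ => ?_
  split_ifs with h
  · rw [hz j h]
  · simp [not_not.1 h]

theorem re_star_dotProduct_le_of_flat (hz : ∀ j, z j ≠ 0 → ‖z j‖ = β) (y : Fin n → ℂ) :
    (star z ⬝ᵥ y).re ≤ β * ∑ j ∈ Finset.univ.filter (z · ≠ 0), ‖y j‖ :=
  calc (star z ⬝ᵥ y).re ≤ ‖star z ⬝ᵥ y‖ := Complex.re_le_norm _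
    _ ≤ ∑ j, ‖star (z j) * y j‖ := norm_sum_le _ _
    _ = ∑ j, ‖z j‖ * ‖y j‖ := by simp
    _ = β * ∑ j ∈ Finset.univ.filter (z · ≠ 0), ‖y j‖ := sum_norm_mul_of_flat hz _

theorem re_star_dotProduct_self_of_flat (hz : ∀ j, z j ≠ 0 → ‖z j‖ = β) :
    (star z ⬝ᵥ z).re = (Finset.univ.filter (z · ≠ 0)).card * β ^ 2 := by
  have hsq : (star z ⬝ᵥ z).re = ∑ j, ‖z j‖ * ‖z j‖ := by
    simp only [dotProduct, Complex.re_sum, Pi.star_apply, Complex.star_def, Complex.conj_mul']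
    norm_cast
    simp [sq]
  rw [hsq, sum_norm_mul_of_flat hz,
    Finset.sum_congr rfl fun j hj => hz j (Finset.mem_filter.1 hj).2, Finset.sum_const,
    nsmul_eq_mul]
  ring

theorem lpNorm_eq_card_rpow_mul_of_flat {q : ℝ≥0∞} (hq : 1 ≤ q) (hq_top : q ≠ ⊤)
    (hz : ∀ j, z j ≠ 0 → ‖z j‖ = β) (hβ : 0 ≤ β) :
    lpNorm q z = ((Finset.univ.filter (z · ≠ 0)).card : ℝ) ^ q.toReal⁻¹ * β := by
  have hr : 0 < q.toReal := zero_lt_one.trans_le (by simpa using ENNReal.toReal_mono hq_top hq)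
  have hsum : ∑ j, ‖z j‖ ^ q.toReal
      = ∑ j ∈ Finset.univ.filter (z · ≠ 0), β ^ q.toReal := by
    rw [← Finset.sum_filter_of_ne fun j _ h => by simpa [hr.ne'] using h]
    exact Finset.sum_congr rfl fun j hj => by rw [hz j (Finset.mem_filter.1 hj).2]
  rw [lpNorm, if_neg hq_top, hsum, Finset.sum_const, nsmul_eq_mul, one_div,
    Real.mul_rpow (by positivity) (by positivity), Real.rpow_rpow_inv hβ hr.ne']

theorem lpNorm_mul_sum_norm_le_of_flat {q : ℝ≥0∞} (hq : 1 ≤ q)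
    (hz : ∀ j, z j ≠ 0 → ‖z j‖ = β) (hβ : 0 ≤ β) (y : Fin n → ℂ) :
    lpNorm q z * ∑ j ∈ Finset.univ.filter (z · ≠ 0), ‖y j‖
      ≤ (Finset.univ.filter (z · ≠ 0)).card * β * lpNorm q y := by
  set T := Finset.univ.filter (z · ≠ 0)
  by_cases hq_top : q = ⊤
  · subst hq_top
    have hz_le : lpNorm ⊤ z ≤ β := by
      rw [lpNorm, if_pos rfl]
      refine Real.iSup_le (fun j => ?_) hβ
      rcases eq_or_ne (z j) 0 with h | h
      · simpa [h] using hβ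
      · exact (hz j h).le
    calc lpNorm ⊤ z * ∑ j ∈ T, ‖y j‖ ≤ β * (T.card * lpNorm ⊤ y) :=
          mul_le_mul hz_le (sum_norm_le_card_mul_lpNorm_top T y)
            (Finset.sum_nonneg fun j _ => norm_nonneg _) hβ
      _ = T.card * β * lpNorm ⊤ y := by ring
  · rw [lpNorm_eq_card_rpow_mul_of_flat hq hq_top hz hβ]
    calc (T.card : ℝ) ^ q.toReal⁻¹ * β * ∑ j ∈ T, ‖y j‖
        ≤ (T.card : ℝ) ^ q.toReal⁻¹ * β * ((T.card : ℝ) ^ (1 - q.toReal⁻¹) * lpNorm q y) := by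
          gcongr
          exact sum_norm_le_card_rpow_mul_lpNorm hq hq_top T y
      _ = ((T.card : ℝ) ^ q.toReal⁻¹ * (T.card : ℝ) ^ (1 - q.toReal⁻¹)) * β * lpNorm q y := by
          ring
      _ = T.card * β * lpNorm q y := by
          rw [← Real.rpow_add' (Nat.cast_nonneg _) (by norm_num), add_sub_cancel, Real.rpow_one]

theorem lpNorm_mul_re_star_dotProduct_le_of_flat {q : ℝ≥0∞} (hq : 1 ≤ q)
    (hz : ∀ j, z j ≠ 0 → ‖z j‖ = β) (y : Fin n → ℂ) :
    lpNorm q z * (star z ⬝ᵥ y).re ≤ (star z ⬝ᵥ z).re * lpNorm q y := by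
  rcases eq_or_ne z 0 with rfl | hz0
  · simp
  obtain ⟨j, hj⟩ := Function.ne_iff.1 hz0
  have hβ : 0 ≤ β := hz j hj ▸ norm_nonneg _
  calc lpNorm q z * (star z ⬝ᵥ y).re
      ≤ lpNorm q z * (β * ∑ j ∈ Finset.univ.filter (z · ≠ 0), ‖y j‖) :=
        mul_le_mul_of_nonneg_left (re_star_dotProduct_le_of_flat hz y) (lpNorm_nonneg q z)
    _ = β * (lpNorm q z * ∑ j ∈ Finset.univ.filter (z · ≠ 0), ‖y j‖) := by ring
    _ ≤ β * ((Finset.univ.filter (z · ≠ 0)).card * β * lpNorm q y) :=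
        mul_le_mul_of_nonneg_left (lpNorm_mul_sum_norm_le_of_flat hq hz hβ y) hβ
    _ = (star z ⬝ᵥ z).re * lpNorm q y := by rw [re_star_dotProduct_self_of_flat hz]; ring

end Flat

theorem eq_of_forall_re_star_dotProduct_eq {ι : Type*} [Fintype ι] {x y : ι → ℂ}
    (h : ∀ w, (star x ⬝ᵥ w).re = (star y ⬝ᵥ w).re) : x = y := by
  classical
  funext k
  have hre := h (Pi.single k 1)
  have him := h (Pi.single k Complex.I)
  simp only [dotProduct_single, Pi.star_apply, Complex.star_def, mul_one, Complex.conj_re,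
    Complex.mul_I_re, Complex.conj_im, neg_neg] at hre him
  exact Complex.ext hre him

theorem star_mulVec_dotProduct_mulVec {ι κ : Type*} [Fintype ι] [Fintype κ]
    (A : Matrix κ ι ℂ) (v w : ι → ℂ) :
    star (A *ᵥ v) ⬝ᵥ A *ᵥ w = star ((Aᴴ * A) *ᵥ v) ⬝ᵥ w := by
  simp [star_mulVec, dotProduct_mulVec, vecMul_vecMul, conjTranspose_mul]

theorem lpNorm_mul_re_star_dotProduct_mulVec_eq {n m : ℕ} {p q : ℝ≥0∞} [Fact (1 ≤ p)]
    [Fact (1 ≤ q)] (A : Matrix (Fin n) (Fin m) ℂ) {v : Fin m → ℂ}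
    (hattain : lpNorm q (A *ᵥ v) = opNorm p q A * lpNorm p v) {β : ℝ}
    (hflat : ∀ j, (A *ᵥ v) j ≠ 0 → ‖(A *ᵥ v) j‖ = β) {w : Fin m → ℂ} {D : ℝ}
    (hD : HasDerivAt (fun t : ℝ => lpNorm p (v + t • w)) D 0) :
    lpNorm q (A *ᵥ v) * (star (A *ᵥ v) ⬝ᵥ A *ᵥ w).re
      = (star (A *ᵥ v) ⬝ᵥ A *ᵥ v).re * opNorm p q A * D := by
  set z := A *ᵥ v
  set c := opNorm p q A
  have hN : 0 ≤ (star z ⬝ᵥ z).re := by rw [re_star_dotProduct_self_of_flat hflat]; positivity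
  set N := (star z ⬝ᵥ z).re
  set b := (star z ⬝ᵥ A *ᵥ w).re
  have hφ := ((((hasDerivAt_id' (0 : ℝ)).mul_const b).const_add N).const_mul
    (lpNorm q z)).fun_sub (hD.const_mul (N * c))
  have hmax : IsLocalMax (fun t : ℝ => lpNorm q z * (N + t * b) - N * c * lpNorm p (v + t • w))
      0 := by
    refine Eventually.of_forall fun t => ?_
    have hline : N + t * b = (star z ⬝ᵥ A *ᵥ (v + t • w)).re := by
      simp [z, N, b, mulVec_add, mulVec_smul, dotProduct_add, dotProduct_smul]
    have hholder :=
      lpNorm_mul_re_star_dotProduct_le_of_flat (q := q) Fact.out hflat (A *ᵥ (v + t • w))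
    have hbound := mul_le_mul_of_nonneg_left (lpNorm_mulVec_le (p := p) (q := q) A (v + t • w)) hN
    have hzero : lpNorm q z * N = N * c * lpNorm p v := by rw [hattain]; ring
    simp only [hline, zero_smul, add_zero, zero_mul]
    linarith
  linarith [hmax.hasDerivAt_eq_zero hφ]

/-- Lemma 3.1 (case `1 < p < ∞`): a maximizer `v` of `‖Ax‖_q/‖x‖_p` whose
nonzero components all have the same absolute value, and such that the same
holds for `Av`, is an eigenvector of `A*A`. -/
theorem stmt_10 {n m : ℕ} (A : Matrix (Fin n) (Fin m) ℂ) (p q : ℝ≥0∞)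
    (hp1 : 1 < p) (hp2 : p ≠ ⊤) (hq : 1 ≤ q)
    (v : Fin m → ℂ) (hv : v ≠ 0)
    (hmax : lpNorm q (A.mulVec v) / lpNorm p v = opNorm p q A)
    (h1 : ∀ i j : Fin m, v i ≠ 0 → v j ≠ 0 → ‖v i‖ = ‖v j‖)
    (h2 : ∀ i j : Fin n, A.mulVec v i ≠ 0 → A.mulVec v j ≠ 0 →
      ‖A.mulVec v i‖ = ‖A.mulVec v j‖) :
    ∃ t : ℂ, (A.conjTranspose * A).mulVec v = t • v := by
  have : Fact (1 ≤ p) := ⟨hp1.le⟩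
  have : Fact (1 ≤ q) := ⟨hq⟩
  obtain ⟨α, hα⟩ := exists_forall_norm_eq_of_pairwise h1
  obtain ⟨β, hβ⟩ := exists_forall_norm_eq_of_pairwise h2
  rcases eq_or_ne (A *ᵥ v) 0 with hAv | hAv
  · exact ⟨0, by rw [← mulVec_mulVec, hAv, mulVec_zero, zero_smul]⟩
  have hattain : lpNorm q (A *ᵥ v) = opNorm p q A * lpNorm p v :=
    (div_eq_iff (lpNorm_pos hv).ne').1 hmax
  set κ := (∑ i, ‖v i‖ ^ p.toReal) ^ (1 / p.toReal - 1) * α ^ (p.toReal - 2)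
  set s := (star (A *ᵥ v) ⬝ᵥ A *ᵥ v).re * opNorm p q A * κ / lpNorm q (A *ᵥ v)
  refine ⟨s, eq_of_forall_re_star_dotProduct_eq fun w => ?_⟩
  have hfirst := lpNorm_mul_re_star_dotProduct_mulVec_eq A hattain hβ
    (hasDerivAt_lpNorm_add_smul hp1 hp2 hv w)
  rw [sum_norm_rpow_mul_inner_of_flat hα] at hfirst
  rw [← star_mulVec_dotProduct_mulVec, star_smul, smul_dotProduct]
  simp only [Complex.star_def, Complex.conj_ofReal, smul_eq_mul, Complex.re_ofReal_mul, s]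
  field_simp [(lpNorm_pos hAv).ne']
  linear_combination hfirst
end
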